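/- Let (Ω, F, μ; (F_i)) be a σ-finite filtered measure space, f ∈ ⋂_i L¹_{F_i⁰}(F, μ) nonnegative, and P ∈ F_i with μ(P) > 0 and 2^{k−1} < E[f|F_i] ≤ 2^k on P. Let τ_P := 1_P · inf{ j ≥ i : E[f|F_j] > 2^{k+1} } and let 𝒫(P) := ⋃ over the principal sets Q with respect to P, where Q ranges over all sets of positive measure of the form Q = {2^{l−1} < 1_{{τ_P = j}} E[f|F_j] ≤ 2^l} with j > i and l > k+1. Then μ(𝒫(P)) ≤ (1/2) μ(P). -/

import Mathlib

/-!
On `P` the process `E[f|F_j]` starts below `2^k`. The sets where it first exceeds `c = 2^{k+1}`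
after time `i` are disjoint and `F_j`-measurable, so on each of them `c μ ≤ ∫ f`; summing gives the
weak (1,1) bound `c μ(𝒫(P)) ≤ ∫_P f = ∫_P E[f|F_i] ≤ 2^k μ(P)`.
-/

open MeasureTheory Function
open scoped ENNReal

namespace MeasureTheory

variable {Ω : Type*} {m m0 : MeasurableSpace Ω} {μ : Measure Ω}

theorem setLIntegral_ofReal_condExp (hm : m ≤ m0) [SigmaFinite (μ.trim hm)] {f : Ω → ℝ}
    (hf : Integrable f μ) (hf0 : 0 ≤ᵐ[μ] f) {s : Set Ω} (hs : MeasurableSet[m] s) :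
    ∫⁻ ω in s, ENNReal.ofReal ((μ[f|m]) ω) ∂μ = ∫⁻ ω in s, ENNReal.ofReal (f ω) ∂μ := by
  rw [← ofReal_integral_eq_lintegral_ofReal integrable_condExp.integrableOn
      (ae_restrict_of_ae (condExp_nonneg hf0)),
    ← ofReal_integral_eq_lintegral_ofReal hf.integrableOn (ae_restrict_of_ae hf0),
    setIntegral_condExp hm hf hs]

/-- `{τ = j}` for the first time `τ > i` at which `X` exceeds `c`. -/
def firstPassageSet (X : ℤ → Ω → ℝ) (c : ℝ) (i j : ℤ) : Set Ω :=
  {ω | i < j ∧ (∀ j', i ≤ j' → j' < j → X j' ω ≤ c) ∧ c < X j ω}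

theorem measurableSet_firstPassageSet {ℱ : Filtration ℤ m0} {X : ℤ → Ω → ℝ} (hX : Adapted ℱ X)
    (c : ℝ) (i j : ℤ) : MeasurableSet[ℱ j] (firstPassageSet X c i j) := by
  by_cases hij : i < j
  · have : firstPassageSet X c i j =
        (⋂ j' ∈ Set.Ico i j, {ω | X j' ω ≤ c}) ∩ {ω | c < X j ω} := by
      ext ω
      simp [firstPassageSet, hij, and_imp]
    rw [this]
    refine .inter (.biInter (Set.to_countable _) fun j' hj' => ?_)
      (measurableSet_lt measurable_const (hX j))
    exact ℱ.mono hj'.2.le _ (measurableSet_le (hX j') measurable_const)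
  · have : firstPassageSet X c i j = ∅ := by
      ext ω
      simp [firstPassageSet, hij]
    rw [this]
    exact @MeasurableSet.empty _ (ℱ j)

theorem pairwise_disjoint_firstPassageSet (X : ℤ → Ω → ℝ) (c : ℝ) (i : ℤ) :
    Pairwise (Disjoint on firstPassageSet X c i) := by
  refine pairwise_disjoint_on _ |>.mpr fun j₁ j₂ hj => Set.disjoint_left.mpr ?_
  rintro ω ⟨hi, -, hexceed⟩ ⟨-, hbelow, -⟩
  exact (hbelow j₁ hi.le hj).not_gt hexceed

theorem ofReal_mul_measure_inter_iUnion_firstPassageSet_le {ℱ : Filtration ℤ m0}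
    [∀ j, SigmaFinite (μ.trim (ℱ.le j))] {f : Ω → ℝ} (hf : Integrable f μ) (hf0 : 0 ≤ᵐ[μ] f)
    (c : ℝ) {i : ℤ} {P : Set Ω} (hP : MeasurableSet[ℱ i] P) :
    ENNReal.ofReal c * μ (P ∩ ⋃ j, firstPassageSet (fun j => μ[f|ℱ j]) c i j) ≤
      ∫⁻ ω in P, ENNReal.ofReal (f ω) ∂μ := by
  set A := fun j => P ∩ firstPassageSet (fun j => μ[f|ℱ j]) c i j
  have hA : ∀ j, MeasurableSet[ℱ j] (A j) := by
    intro j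
    by_cases hij : i ≤ j
    · exact (ℱ.mono hij _ hP).inter
        (measurableSet_firstPassageSet (fun j => stronglyMeasurable_condExp.measurable) c i j)
    · have : A j = ∅ := Set.eq_empty_of_forall_notMem fun ω hω => hij hω.2.1.le
      rw [this]
      exact @MeasurableSet.empty _ (ℱ j)
  have hA0 : ∀ j, MeasurableSet (A j) := fun j => ℱ.le j _ (hA j)
  have hdisj : Pairwise (Disjoint on A) := fun j₁ j₂ h =>
    ((pairwise_disjoint_firstPassageSet _ c i) h).mono Set.inter_subset_right
      Set.inter_subset_right
  have hbound : ∀ j, ENNReal.ofReal c * μ (A j) ≤ ∫⁻ ω in A j, ENNReal.ofReal (f ω) ∂μ := by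
    intro j
    rw [← setLIntegral_ofReal_condExp (ℱ.le j) hf hf0 (hA j), ← setLIntegral_const]
    exact setLIntegral_mono' (hA0 j) fun ω hω => ENNReal.ofReal_le_ofReal hω.2.2.2.le
  calc ENNReal.ofReal c * μ (P ∩ ⋃ j, firstPassageSet (fun j => μ[f|ℱ j]) c i j)
      = ∑' j, ENNReal.ofReal c * μ (A j) := by
        rw [Set.inter_iUnion, measure_iUnion hdisj hA0, ENNReal.tsum_mul_left]
    _ ≤ ∑' j, ∫⁻ ω in A j, ENNReal.ofReal (f ω) ∂μ := ENNReal.tsum_le_tsum hbound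
    _ = ∫⁻ ω in ⋃ j, A j, ENNReal.ofReal (f ω) ∂μ := (lintegral_iUnion hA0 hdisj _).symm
    _ ≤ ∫⁻ ω in P, ENNReal.ofReal (f ω) ∂μ :=
        lintegral_mono_set (Set.iUnion_subset fun _ => Set.inter_subset_left)

end MeasureTheory

/-- `ω ∈ 𝒫(P)` iff `ω ∈ P`, `τ_P(ω) = j` for some finite `j > i`, and the stopped value
`E[f|F_j](ω)` lies in a band `(2^{l-1}, 2^l]` with `l > k+1`. -/
theorem stmt7_general {Ω : Type*} {m0 : MeasurableSpace Ω} (μ : Measure Ω)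
    (ℱ : MeasureTheory.Filtration ℤ m0) [∀ i, SigmaFinite (μ.trim (ℱ.le i))]
    (f : Ω → ℝ) (hf0 : 0 ≤ f)
    (i k : ℤ) (P : Set Ω) (hP : MeasurableSet[ℱ i] P)
    (hPu : ∀ ω ∈ P, (μ[f|ℱ i]) ω ≤ (2 : ℝ) ^ k) :
    μ {ω | ω ∈ P ∧ ∃ j : ℤ, i < j ∧
        (∀ j' : ℤ, i ≤ j' → j' < j → (μ[f|ℱ j']) ω ≤ (2 : ℝ) ^ (k + 1)) ∧
        (2 : ℝ) ^ (k + 1) < (μ[f|ℱ j]) ω ∧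
        ∃ l : ℤ, k + 1 < l ∧ (2 : ℝ) ^ (l - 1) < (μ[f|ℱ j]) ω ∧
          (μ[f|ℱ j]) ω ≤ (2 : ℝ) ^ l} ≤
      μ P / 2 := by
  have hpow : (0 : ℝ) < 2 ^ k := zpow_pos two_pos k
  by_cases hf : Integrable f μ
  swap
  · -- Mathlib's `μ[f|ℱ j]` is `0` for non-integrable `f`, so `𝒫(P)` is empty.
    refine le_of_eq_of_le (measure_mono_null (fun ω hω => ?_) measure_empty) bot_le
    obtain ⟨-, j, -, -, hexceed, -⟩ := hω
    rw [condExp_of_not_integrable hf] at hexceed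
    exact ((zpow_pos two_pos (k + 1)).trans hexceed).false
  set hits := P ∩ ⋃ j, firstPassageSet (fun j => μ[f|ℱ j]) (2 ^ (k + 1)) i j
  have hmaximal : ENNReal.ofReal (2 ^ (k + 1)) * μ hits ≤ ∫⁻ ω in P, ENNReal.ofReal (f ω) ∂μ :=
    ofReal_mul_measure_inter_iUnion_firstPassageSet_le hf (ae_of_all _ hf0) _ hP
  have hstart : ∫⁻ ω in P, ENNReal.ofReal (f ω) ∂μ ≤ ENNReal.ofReal (2 ^ k) * μ P := by
    rw [← setLIntegral_ofReal_condExp (ℱ.le i) hf (ae_of_all _ hf0) hP, ← setLIntegral_const]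
    exact setLIntegral_mono' (ℱ.le i _ hP) fun ω hω => ENNReal.ofReal_le_ofReal (hPu ω hω)
  have hdouble : 2 * μ hits ≤ μ P := by
    refine (ENNReal.mul_le_mul_iff_right (by simpa using hpow) ENNReal.ofReal_ne_top).mp ?_
    calc _ = ENNReal.ofReal (2 ^ (k + 1)) * μ hits := by
          rw [zpow_add_one₀ two_ne_zero, ENNReal.ofReal_mul hpow.le, mul_assoc]; simp
      _ ≤ _ := hmaximal.trans hstart
  rw [ENNReal.le_div_iff_mul_le (by simp) (by simp), mul_comm]
  refine (mul_le_mul_right (measure_mono ?_) 2).trans hdouble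
  rintro ω ⟨hωP, j, hij, hbelow, hexceed, -⟩
  exact ⟨hωP, Set.mem_iUnion.mpr ⟨j, hij, hbelow, hexceed⟩⟩

/-- the union `𝒫(P)` of the principal sets with respect to `P`
(the sets `Q = {2^{l-1} < 1_{{τ_P = j}} E[f|F_j] ≤ 2^l}`, `j > i`, `l > k+1`) satisfies
`μ(𝒫(P)) ≤ μ(P)/2`.  Here `ω` belongs to `𝒫(P)` iff `ω ∈ P`, the stopping time is
attained at some finite `j > i` (first time `E[f|F_j](ω) > 2^{k+1}`), and the stopped
value lies in some dyadic band `(2^{l-1}, 2^l]` with `l > k+1`. -/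
theorem stmt7 {Ω : Type*} {m0 : MeasurableSpace Ω} (μ : Measure Ω) [SigmaFinite μ]
    (ℱ : MeasureTheory.Filtration ℤ m0) [∀ i, SigmaFinite (μ.trim (ℱ.le i))]
    (f : Ω → ℝ) (hf : Measurable f) (hf0 : 0 ≤ f)
    (hf𝓛 : ∀ (i : ℤ) (E : Set Ω), MeasurableSet[ℱ i] E → μ E < ∞ →
      Integrable f (μ.restrict E))
    (i k : ℤ) (P : Set Ω) (hP : MeasurableSet[ℱ i] P) (hμP : 0 < μ P)
    (hPl : ∀ ω ∈ P, (2 : ℝ) ^ (k - 1) < (μ[f|ℱ i]) ω)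
    (hPu : ∀ ω ∈ P, (μ[f|ℱ i]) ω ≤ (2 : ℝ) ^ k) :
    μ {ω | ω ∈ P ∧ ∃ j : ℤ, i < j ∧
        (∀ j' : ℤ, i ≤ j' → j' < j → (μ[f|ℱ j']) ω ≤ (2 : ℝ) ^ (k + 1)) ∧
        (2 : ℝ) ^ (k + 1) < (μ[f|ℱ j]) ω ∧
        ∃ l : ℤ, k + 1 < l ∧ (2 : ℝ) ^ (l - 1) < (μ[f|ℱ j]) ω ∧
          (μ[f|ℱ j]) ω ≤ (2 : ℝ) ^ l} ≤
      μ P / 2 :=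
  stmt7_general μ ℱ f hf0 i k P hP hPu
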